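/- arXiv:2107.14075 — 4 statements merged into one kernel-verified Lean document; each statement's English description precedes it below -/
import Mathlib

section
/- Let 𝓕 be an ω-closed family of subsets of ℕ and let x = (i₁,j₁,F₁), y = (i₂,j₂,F₂) ∈ S(𝓕). Then x and y generate the same principal two-sided ideal of S(𝓕), i.e. {x} ∪ x·S(𝓕) ∪ S(𝓕)·x ∪ S(𝓕)·x·S(𝓕) = {y} ∪ y·S(𝓕) ∪ S(𝓕)·y ∪ S(𝓕)·y·S(𝓕), if and only if there exist k₁, k₂ ∈ ℕ such that F₁ ⊆ −k₁ + F₂ and F₂ ⊆ −k₂ + F₁. -/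
/-- `zshift n F = {n + k : k ∈ F}`. -/
def zshift (n : ℤ) (F : Set ℤ) : Set ℤ := {m : ℤ | ∃ k ∈ F, m = n + k}

/-- A family of subsets of `ℕ` (viewed as subsets of `ℤ`) is `ω`-closed if it consists of
sets of nonnegative integers and `F₁ ∩ (-n + F₂)` belongs to the family for all `n : ℕ`
and all members `F₁, F₂` of the family. -/
def OmegaClosed (𝓕 : Set (Set ℤ)) : Prop :=
  (∀ F ∈ 𝓕, ∀ x ∈ F, 0 ≤ x) ∧
    ∀ n : ℕ, ∀ F₁ ∈ 𝓕, ∀ F₂ ∈ 𝓕, F₁ ∩ zshift (-(n : ℤ)) F₂ ∈ 𝓕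

/-- The binary operation on triples `(i, j, F)`:
`(i₁,j₁,F₁)·(i₂,j₂,F₂) = (i₁−j₁+i₂, j₂, (j₁−i₂+F₁) ∩ F₂)` if `j₁ < i₂`;
`(i₁, j₂, F₁ ∩ F₂)` if `j₁ = i₂`; `(i₁, j₁−i₂+j₂, F₁ ∩ (i₂−j₁+F₂))` if `j₁ > i₂`. -/
def smul3 (x y : ℤ × ℤ × Set ℤ) : ℤ × ℤ × Set ℤ :=
  if x.2.1 < y.1 then
    (x.1 - x.2.1 + y.1, y.2.1, zshift (x.2.1 - y.1) x.2.2 ∩ y.2.2)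
  else if x.2.1 = y.1 then
    (x.1, y.2.1, x.2.2 ∩ y.2.2)
  else
    (x.1, x.2.1 - y.1 + y.2.1, x.2.2 ∩ zshift (y.1 - x.2.1) y.2.2)

/-- The carrier of the semigroup `S(𝓕)`: all triples whose third component lies in `𝓕`. -/
def Scar (𝓕 : Set (Set ℤ)) : Set (ℤ × ℤ × Set ℤ) := {x | x.2.2 ∈ 𝓕}

/-- The principal two-sided ideal of `x` in `S(𝓕)`:
`{x} ∪ x·S(𝓕) ∪ S(𝓕)·x ∪ S(𝓕)·x·S(𝓕)`. -/
def jIdeal (𝓕 : Set (Set ℤ)) (x : ℤ × ℤ × Set ℤ) : Set (ℤ × ℤ × Set ℤ) :=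
  {x} ∪ smul3 x '' Scar 𝓕 ∪ (fun s => smul3 s x) '' Scar 𝓕 ∪
    {z | ∃ s ∈ Scar 𝓕, ∃ t ∈ Scar 𝓕, z = smul3 (smul3 s x) t}

/-!
The third coordinate of a product in `S(𝓕)` lies in a translate `-k + F` (`k ∈ ℕ`) of the third
coordinate `F` of either factor. Conversely, if `K ⊆ -m + F` with `K ∈ 𝓕`, then
`(e, f, K) = (e, i + m, K) · (i, j, F) · (m + j, f, K)`. So the principal ideal of `(i, j, F)` is
the set of all `(e, f, K) ∈ S(𝓕)` with `K ⊆ -m + F` for some `m ∈ ℕ`, and it depends on `F` only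
up to the preorder `ShiftLE`.
-/

def ShiftLE (F G : Set ℤ) : Prop := ∃ k : ℕ, F ⊆ zshift (-(k : ℤ)) G

lemma zshift_zero (F : Set ℤ) : zshift 0 F = F := by
  ext m; simp [zshift]

lemma shiftLE_of_subset {F G : Set ℤ} (h : F ⊆ G) : ShiftLE F G :=
  ⟨0, by rwa [Nat.cast_zero, neg_zero, zshift_zero]⟩

lemma shiftLE_refl (F : Set ℤ) : ShiftLE F F := shiftLE_of_subset subset_rfl

lemma ShiftLE.trans {F G H : Set ℤ} (hFG : ShiftLE F G) (hGH : ShiftLE G H) : ShiftLE F H := by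
  obtain ⟨a, ha⟩ := hFG
  obtain ⟨b, hb⟩ := hGH
  refine ⟨a + b, fun m hm => ?_⟩
  obtain ⟨k, hk, rfl⟩ := ha hm
  obtain ⟨l, hl, rfl⟩ := hb hk
  exact ⟨l, hl, by push_cast; ring⟩

lemma shiftLE_zshift {a : ℤ} (ha : a ≤ 0) (F : Set ℤ) : ShiftLE (zshift a F) F :=
  ⟨a.natAbs, by rw [Int.ofNat_natAbs_of_nonpos ha, neg_neg]⟩

lemma OmegaClosed.inter_zshift_mem {𝓕 : Set (Set ℤ)} (h : OmegaClosed 𝓕) {F G : Set ℤ}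
    (hF : F ∈ 𝓕) (hG : G ∈ 𝓕) {a : ℤ} (ha : a ≤ 0) : F ∩ zshift a G ∈ 𝓕 := by
  simpa [Int.ofNat_natAbs_of_nonpos ha] using h.2 a.natAbs F hF G hG

lemma smul3_mem_Scar {𝓕 : Set (Set ℤ)} (h : OmegaClosed 𝓕) {u v : ℤ × ℤ × Set ℤ}
    (hu : u ∈ Scar 𝓕) (hv : v ∈ Scar 𝓕) : smul3 u v ∈ Scar 𝓕 := by
  unfold smul3
  split_ifs with hlt heq
  · exact Set.inter_comm _ _ ▸ h.inter_zshift_mem hv hu (by omega)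
  · simpa [Scar, zshift_zero] using h.inter_zshift_mem hu hv le_rfl
  · exact h.inter_zshift_mem hu hv (by omega)

lemma shiftLE_smul3_left (u v : ℤ × ℤ × Set ℤ) : ShiftLE (smul3 u v).2.2 u.2.2 := by
  unfold smul3
  split_ifs with hlt heq
  · exact (shiftLE_of_subset Set.inter_subset_left).trans (shiftLE_zshift (by omega) _)
  · exact shiftLE_of_subset Set.inter_subset_left
  · exact shiftLE_of_subset Set.inter_subset_left

lemma shiftLE_smul3_right (u v : ℤ × ℤ × Set ℤ) : ShiftLE (smul3 u v).2.2 v.2.2 := by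
  unfold smul3
  split_ifs with hlt heq
  · exact shiftLE_of_subset Set.inter_subset_right
  · exact shiftLE_of_subset Set.inter_subset_right
  · exact (shiftLE_of_subset Set.inter_subset_right).trans (shiftLE_zshift (by omega) _)

lemma smul3_add_nat_left (e i j : ℤ) (m : ℕ) (K F : Set ℤ) :
    smul3 (e, i + m, K) (i, j, F) = (e, m + j, K ∩ zshift (-(m : ℤ)) F) := by
  simp only [smul3]
  split_ifs with hlt heq
  · omega
  · obtain rfl : m = 0 := by omega
    simp [zshift_zero]
  · simp only [Prod.mk.injEq, true_and]
    exact ⟨by ring, by ring_nf⟩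

lemma smul3_of_eq (e f n : ℤ) (K : Set ℤ) : smul3 (e, n, K) (n, f, K) = (e, f, K) := by
  simp [smul3]

lemma jIdeal_eq {𝓕 : Set (Set ℤ)} (h : OmegaClosed 𝓕) {x : ℤ × ℤ × Set ℤ} (hx : x ∈ Scar 𝓕) :
    jIdeal 𝓕 x = {z | z ∈ Scar 𝓕 ∧ ShiftLE z.2.2 x.2.2} := by
  ext z
  constructor
  · simp only [jIdeal, Set.mem_union, Set.mem_singleton_iff, Set.mem_image, Set.mem_ofPred_eq]
    rintro (((rfl | ⟨t, ht, rfl⟩) | ⟨s, hs, rfl⟩) | ⟨s, hs, t, ht, rfl⟩)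
    · exact ⟨hx, shiftLE_refl _⟩
    · exact ⟨smul3_mem_Scar h hx ht, shiftLE_smul3_left _ _⟩
    · exact ⟨smul3_mem_Scar h hs hx, shiftLE_smul3_right _ _⟩
    · exact ⟨smul3_mem_Scar h (smul3_mem_Scar h hs hx) ht,
        (shiftLE_smul3_left _ _).trans (shiftLE_smul3_right _ _)⟩
  · obtain ⟨i, j, F⟩ := x
    obtain ⟨e, f, K⟩ := z
    rintro ⟨hK, m, hKF⟩
    refine Set.mem_union_right _ ⟨(e, i + m, K), hK, ((m : ℤ) + j, f, K), hK, ?_⟩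
    rw [smul3_add_nat_left, Set.inter_eq_left.mpr hKF, smul3_of_eq]

/-- description of Green's relation `𝒥` on `S(𝓕)`. -/
theorem stmt9 (𝓕 : Set (Set ℤ)) (h : OmegaClosed 𝓕) (i₁ j₁ i₂ j₂ : ℤ) (F₁ F₂ : Set ℤ)
    (hF₁ : F₁ ∈ 𝓕) (hF₂ : F₂ ∈ 𝓕) :
    jIdeal 𝓕 (i₁, j₁, F₁) = jIdeal 𝓕 (i₂, j₂, F₂) ↔
      ∃ k₁ k₂ : ℕ, F₁ ⊆ zshift (-(k₁ : ℤ)) F₂ ∧ F₂ ⊆ zshift (-(k₂ : ℤ)) F₁ := by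
  rw [jIdeal_eq h (x := (i₁, j₁, F₁)) hF₁, jIdeal_eq h (x := (i₂, j₂, F₂)) hF₂]
  constructor
  · intro hEq
    have h₁₂ : (i₁, j₁, F₁) ∈ {z | z ∈ Scar 𝓕 ∧ ShiftLE z.2.2 F₂} :=
      hEq ▸ ⟨hF₁, shiftLE_refl F₁⟩
    have h₂₁ : (i₂, j₂, F₂) ∈ {z | z ∈ Scar 𝓕 ∧ ShiftLE z.2.2 F₁} :=
      hEq ▸ ⟨hF₂, shiftLE_refl F₂⟩
    obtain ⟨-, k₁, hk₁⟩ := h₁₂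
    obtain ⟨-, k₂, hk₂⟩ := h₂₁
    exact ⟨k₁, k₂, hk₁, hk₂⟩
  · rintro ⟨k₁, k₂, hk₁, hk₂⟩
    ext z
    exact ⟨fun hz => ⟨hz.1, hz.2.trans ⟨k₁, hk₁⟩⟩, fun hz => ⟨hz.1, hz.2.trans ⟨k₂, hk₂⟩⟩⟩
end

section
/- Fix a positive integer j₀ and i₁, i₂ ∈ ℕ, and for i ∈ ℕ let 𝓕(i) = {∅, i + j₀ℕ} where i + j₀ℕ = {i + j₀·m : m ∈ ℕ}. Then each family 𝓕(i) is ω-closed, and there exists a multiplication-preserving bijection from S(𝓕(i₁)) onto S(𝓕(i₂)), namely the map sending (n, m, i₁ + j₀ℕ) to (n, m, i₂ + j₀ℕ) and (n, m, ∅) to (n, m, ∅); hence the semigroups S(𝓕(i₁)) and S(𝓕(i₂)) are isomorphic. -/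
/-- The arithmetic progression `i + j₀·ℕ` viewed as a subset of `ℤ`. -/
def arithSet (i j₀ : ℕ) : Set ℤ := {m : ℤ | ∃ l : ℕ, m = (i : ℤ) + (j₀ : ℤ) * l}

/-- The family `𝓕(i) = {∅, i + j₀·ℕ}`. -/
def arithFam (i j₀ : ℕ) : Set (Set ℤ) := {(∅ : Set ℤ), arithSet i j₀}

open Classical

/-- The map sending `(n, m, i₁ + j₀·ℕ)` to `(n, m, i₂ + j₀·ℕ)` and `(n, m, ∅)` to
`(n, m, ∅)`. -/
noncomputable def transferMap (i₂ j₀ : ℕ) (x : ℤ × ℤ × Set ℤ) : ℤ × ℤ × Set ℤ :=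
  (x.1, x.2.1, if x.2.2 = (∅ : Set ℤ) then (∅ : Set ℤ) else arithSet i₂ j₀)

/-!
`𝓕(i)` is `ω`-closed because `(i + j₀ℕ) ∩ (-n + (i + j₀ℕ))` is `i + j₀ℕ` when `j₀ ∣ n` and empty
otherwise. On `S(𝓕(i₁))` the map `transferMap` is translation of the third component by `i₂ - i₁`.
Translating third components is an automorphism of `smul3` on all triples, because translations
of `ℤ` commute with each other and with intersections; and `ω`-closedness keeps products inside
`S(𝓕(i₁))`, where `transferMap` agrees with that translation.
-/

open Pointwise Set

theorem zshift_eq_vadd (n : ℤ) (F : Set ℤ) : zshift n F = n +ᵥ F := by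
  ext m
  simp only [zshift, mem_ofPred_eq, mem_vadd_set, vadd_eq_add]
  exact ⟨fun ⟨k, hk, h⟩ => ⟨k, hk, h.symm⟩, fun ⟨k, hk, h⟩ => ⟨k, hk, h.symm⟩⟩

def shiftThird (d : ℤ) (x : ℤ × ℤ × Set ℤ) : ℤ × ℤ × Set ℤ :=
  (x.1, x.2.1, zshift d x.2.2)

theorem shiftThird_neg_shiftThird (d : ℤ) (x : ℤ × ℤ × Set ℤ) :
    shiftThird (-d) (shiftThird d x) = x := by
  simp [shiftThird, zshift_eq_vadd, vadd_vadd]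

theorem smul3_shiftThird (d : ℤ) (x y : ℤ × ℤ × Set ℤ) :
    smul3 (shiftThird d x) (shiftThird d y) = shiftThird d (smul3 x y) := by
  unfold smul3 shiftThird
  split_ifs <;> simp only [zshift_eq_vadd, vadd_set_inter, vadd_vadd, add_comm d]

theorem bijOn_shiftThird {𝓕 𝓖 : Set (Set ℤ)} (d : ℤ) (h𝓕 : MapsTo (zshift d) 𝓕 𝓖)
    (h𝓖 : MapsTo (zshift (-d)) 𝓖 𝓕) : BijOn (shiftThird d) (Scar 𝓕) (Scar 𝓖) := by
  refine InvOn.bijOn (f' := shiftThird (-d)) ⟨fun x _ => ?_, fun y _ => ?_⟩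
    (fun x hx => h𝓕 hx) (fun y hy => h𝓖 hy)
  · exact shiftThird_neg_shiftThird d x
  · simpa using shiftThird_neg_shiftThird (-d) y

theorem smul3_mem_Scar_s17 {𝓕 : Set (Set ℤ)} (h𝓕 : OmegaClosed 𝓕) {x y : ℤ × ℤ × Set ℤ}
    (hx : x ∈ Scar 𝓕) (hy : y ∈ Scar 𝓕) : smul3 x y ∈ Scar 𝓕 := by
  obtain ⟨-, hclosed⟩ := h𝓕
  unfold smul3
  split_ifs with hlt heq
  · obtain ⟨n, hn⟩ := Int.exists_eq_neg_ofNat (sub_nonpos.mpr hlt.le)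
    simpa only [Scar, mem_ofPred_eq, hn, inter_comm] using hclosed n _ hy _ hx
  · simpa [Scar, zshift_eq_vadd] using hclosed 0 _ hx _ hy
  · obtain ⟨n, hn⟩ := Int.exists_eq_neg_ofNat (sub_nonpos.mpr (not_lt.mp hlt))
    simpa only [Scar, mem_ofPred_eq, hn] using hclosed n _ hx _ hy

theorem arithSet_nonempty (i j₀ : ℕ) : (arithSet i j₀).Nonempty :=
  ⟨i, 0, by simp⟩

theorem nonneg_of_mem_arithSet {i j₀ : ℕ} {m : ℤ} (hm : m ∈ arithSet i j₀) : 0 ≤ m := by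
  obtain ⟨l, rfl⟩ := hm
  positivity

theorem zshift_arithSet (i i' j₀ : ℕ) : zshift ((i' : ℤ) - i) (arithSet i j₀) = arithSet i' j₀ := by
  ext m
  simp only [zshift, arithSet, mem_ofPred_eq]
  constructor
  · rintro ⟨_, ⟨l, rfl⟩, rfl⟩
    exact ⟨l, by ring⟩
  · rintro ⟨l, rfl⟩
    exact ⟨_, ⟨l, rfl⟩, by ring⟩

theorem arithSet_inter_zshift (i j₀ n : ℕ) :
    arithSet i j₀ ∩ zshift (-(n : ℤ)) (arithSet i j₀) = ∅ ∨
      arithSet i j₀ ∩ zshift (-(n : ℤ)) (arithSet i j₀) = arithSet i j₀ := by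
  by_cases hdvd : j₀ ∣ n
  · obtain ⟨e, rfl⟩ := hdvd
    refine Or.inr (inter_eq_left.mpr ?_)
    rintro _ ⟨l, rfl⟩
    exact ⟨_, ⟨l + e, rfl⟩, by push_cast; ring⟩
  · refine Or.inl (eq_empty_of_forall_notMem ?_)
    rintro _ ⟨⟨l, rfl⟩, _, ⟨l', rfl⟩, h⟩
    exact hdvd (Int.natCast_dvd_natCast.mp ⟨l' - l, by linarith⟩)

theorem mem_arithFam {F : Set ℤ} {i j₀ : ℕ} :
    F ∈ arithFam i j₀ ↔ F = ∅ ∨ F = arithSet i j₀ := Iff.rfl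

theorem omegaClosed_arithFam (i j₀ : ℕ) : OmegaClosed (arithFam i j₀) := by
  refine ⟨fun F hF x hx => ?_, fun n F₁ h₁ F₂ h₂ => ?_⟩
  · obtain rfl | rfl := mem_arithFam.mp hF
    exacts [absurd hx (notMem_empty x), nonneg_of_mem_arithSet hx]
  obtain rfl | rfl := mem_arithFam.mp h₁
  · exact Or.inl (empty_inter _)
  obtain rfl | rfl := mem_arithFam.mp h₂
  · exact Or.inl (by simp [zshift_eq_vadd])
  · exact arithSet_inter_zshift i j₀ n

theorem mapsTo_zshift_arithFam (i i' j₀ : ℕ) :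
    MapsTo (zshift ((i' : ℤ) - i)) (arithFam i j₀) (arithFam i' j₀) := by
  rintro F (rfl | rfl)
  · exact Or.inl (by simp [zshift_eq_vadd])
  · exact Or.inr (zshift_arithSet i i' j₀)

theorem transferMap_eq_shiftThird {i₁ i₂ j₀ : ℕ} {x : ℤ × ℤ × Set ℤ}
    (hx : x ∈ Scar (arithFam i₁ j₀)) : transferMap i₂ j₀ x = shiftThird ((i₂ : ℤ) - i₁) x := by
  obtain ⟨a, b, F⟩ := x
  obtain rfl | rfl := mem_arithFam.mp hx
  · simp [transferMap, shiftThird, zshift_eq_vadd]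
  · simp [transferMap, shiftThird, (arithSet_nonempty i₁ j₀).ne_empty, zshift_arithSet]

theorem stmt17_general (j₀ : ℕ) (i₁ i₂ : ℕ) :
    (∀ i : ℕ, OmegaClosed (arithFam i j₀)) ∧
    Set.BijOn (transferMap i₂ j₀) (Scar (arithFam i₁ j₀)) (Scar (arithFam i₂ j₀)) ∧
    (∀ x ∈ Scar (arithFam i₁ j₀), ∀ y ∈ Scar (arithFam i₁ j₀),
      transferMap i₂ j₀ (smul3 x y) = smul3 (transferMap i₂ j₀ x) (transferMap i₂ j₀ y)) := by
  have hEq : EqOn (shiftThird ((i₂ : ℤ) - i₁)) (transferMap i₂ j₀) (Scar (arithFam i₁ j₀)) :=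
    fun x hx => (transferMap_eq_shiftThird hx).symm
  refine ⟨fun i => omegaClosed_arithFam i j₀, ?_, fun x hx y hy => ?_⟩
  · refine (bijOn_shiftThird _ (mapsTo_zshift_arithFam i₁ i₂ j₀) ?_).congr hEq
    simpa only [neg_sub] using mapsTo_zshift_arithFam i₂ i₁ j₀
  · rw [← hEq hx, ← hEq hy, ← hEq (smul3_mem_Scar_s17 (omegaClosed_arithFam i₁ j₀) hx hy),
      smul3_shiftThird]

/-- each family `𝓕(i) = {∅, i + j₀·ℕ}` is `ω`-closed, and for any
`i₁, i₂ ∈ ℕ` the indicated map is a multiplication-preserving bijection from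
`S(𝓕(i₁))` onto `S(𝓕(i₂))`; hence these semigroups are isomorphic. -/
theorem stmt17 (j₀ : ℕ) (hj₀ : 0 < j₀) (i₁ i₂ : ℕ) :
    (∀ i : ℕ, OmegaClosed (arithFam i j₀)) ∧
    Set.BijOn (transferMap i₂ j₀) (Scar (arithFam i₁ j₀)) (Scar (arithFam i₂ j₀)) ∧
    (∀ x ∈ Scar (arithFam i₁ j₀), ∀ y ∈ Scar (arithFam i₁ j₀),
      transferMap i₂ j₀ (smul3 x y) = smul3 (transferMap i₂ j₀ x) (transferMap i₂ j₀ y)) :=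
  stmt17_general j₀ i₁ i₂
end

section
/- Let 𝓕 be a nonempty ω-closed family of subsets of ℕ with ∅ ∉ 𝓕. Then: (a) for x = (i₁,j₁,F₁) and y = (i₂,j₂,F₂) in S(𝓕), there exists an idempotent e ∈ S(𝓕) with e·x = e·y if and only if i₁ − j₁ = i₂ − j₂ (this relation is the least group congruence σ on the inverse semigroup S(𝓕)); (b) the map S(𝓕) → ℤ sending (i,j,F) to i − j is a surjective homomorphism from (S(𝓕), ·) to the additive group (ℤ, +); consequently the quotient of S(𝓕) by σ is isomorphic to the additive group of integers. -/
lemma zshift_mono {n : ℤ} {F G : Set ℤ} (hFG : F ⊆ G) : zshift n F ⊆ zshift n G := by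
  rintro x ⟨k, hk, rfl⟩
  exact ⟨k, hFG hk, rfl⟩

lemma zshift_zshift (a b : ℤ) (F : Set ℤ) : zshift a (zshift b F) = zshift (a + b) F := by
  ext x
  constructor
  · rintro ⟨-, ⟨k, hk, rfl⟩, rfl⟩
    exact ⟨k, hk, by ring⟩
  · rintro ⟨k, hk, rfl⟩
    exact ⟨b + k, ⟨k, hk, rfl⟩, by ring⟩

lemma smul3_index_sub (x y : ℤ × ℤ × Set ℤ) :
    (smul3 x y).1 - (smul3 x y).2.1 = (x.1 - x.2.1) + (y.1 - y.2.1) := by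
  unfold smul3
  split_ifs <;> simp only <;> omega

lemma smul3_diag_self (m : ℤ) (E : Set ℤ) : smul3 (m, m, E) (m, m, E) = (m, m, E) := by
  simp [smul3]

lemma smul3_diag_of_lt {m i j : ℤ} {E F : Set ℤ} (him : i < m) (hE : E ⊆ zshift (i - m) F) :
    smul3 (m, m, E) (i, j, F) = (m, m - i + j, E) := by
  simp only [smul3, if_neg him.not_gt, if_neg him.ne', Set.inter_eq_left.mpr hE]

namespace OmegaClosed

variable {𝓕 : Set (Set ℤ)}

lemma inter_zshift_mem_s18 (h : OmegaClosed 𝓕) {n : ℤ} (hn : n ≤ 0) {F₁ F₂ : Set ℤ}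
    (hF₁ : F₁ ∈ 𝓕) (hF₂ : F₂ ∈ 𝓕) : F₁ ∩ zshift n F₂ ∈ 𝓕 := by
  obtain ⟨k, rfl⟩ := Int.exists_eq_neg_ofNat hn
  exact h.2 k F₁ hF₁ F₂ hF₂

lemma exists_subset_zshift_of_le (h : OmegaClosed 𝓕) {a b : ℤ} (hba : b ≤ a) (ha : a ≤ 0)
    {F₁ F₂ : Set ℤ} (hF₁ : F₁ ∈ 𝓕) (hF₂ : F₂ ∈ 𝓕) :
    ∃ E ∈ 𝓕, E ⊆ zshift a F₁ ∧ E ⊆ zshift b F₂ := by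
  have hG : F₁ ∩ zshift (b - a) F₂ ∈ 𝓕 := h.inter_zshift_mem_s18 (by omega) hF₁ hF₂
  set G := F₁ ∩ zshift (b - a) F₂
  refine ⟨G ∩ zshift a G, h.inter_zshift_mem_s18 ha hG hG, ?_, ?_⟩
  · exact Set.inter_subset_right.trans (zshift_mono Set.inter_subset_left)
  · calc G ∩ zshift a G ⊆ zshift a (zshift (b - a) F₂) :=
          Set.inter_subset_right.trans (zshift_mono Set.inter_subset_right)
      _ = zshift b F₂ := by rw [zshift_zshift, add_sub_cancel]

lemma exists_subset_zshift (h : OmegaClosed 𝓕) {a b : ℤ} (ha : a ≤ 0) (hb : b ≤ 0)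
    {F₁ F₂ : Set ℤ} (hF₁ : F₁ ∈ 𝓕) (hF₂ : F₂ ∈ 𝓕) :
    ∃ E ∈ 𝓕, E ⊆ zshift a F₁ ∧ E ⊆ zshift b F₂ := by
  rcases le_total b a with hba | hab
  · exact h.exists_subset_zshift_of_le hba ha hF₁ hF₂
  · obtain ⟨E, hE, hE₂, hE₁⟩ := h.exists_subset_zshift_of_le hab hb hF₂ hF₁
    exact ⟨E, hE, hE₁, hE₂⟩

end OmegaClosed

theorem stmt18_general (𝓕 : Set (Set ℤ)) (h : OmegaClosed 𝓕) (hne : 𝓕.Nonempty) :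
    (∀ i₁ j₁ i₂ j₂ : ℤ, ∀ F₁ ∈ 𝓕, ∀ F₂ ∈ 𝓕,
      ((∃ e ∈ Scar 𝓕, smul3 e e = e ∧
        smul3 e (i₁, j₁, F₁) = smul3 e (i₂, j₂, F₂)) ↔ i₁ - j₁ = i₂ - j₂)) ∧
    (∀ x ∈ Scar 𝓕, ∀ y ∈ Scar 𝓕,
      (smul3 x y).1 - (smul3 x y).2.1 = (x.1 - x.2.1) + (y.1 - y.2.1)) ∧
    (∀ z : ℤ, ∃ x ∈ Scar 𝓕, x.1 - x.2.1 = z) := by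
  obtain ⟨F₀, hF₀⟩ := hne
  refine ⟨?_, fun x _ y _ => smul3_index_sub x y, fun z => ⟨(z, 0, F₀), hF₀, by simp⟩⟩
  intro i₁ j₁ i₂ j₂ F₁ hF₁ F₂ hF₂
  constructor
  · rintro ⟨e, -, -, heq⟩
    have hindex := congrArg (fun x => x.1 - x.2.1) heq
    simp only [smul3_index_sub] at hindex
    omega
  · intro hij
    set m := max i₁ i₂ + 1
    obtain ⟨E, hE, hE₁, hE₂⟩ :=
      h.exists_subset_zshift (a := i₁ - m) (b := i₂ - m) (by omega) (by omega) hF₁ hF₂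
    refine ⟨(m, m, E), hE, smul3_diag_self m E, ?_⟩
    rw [smul3_diag_of_lt (by omega) hE₁, smul3_diag_of_lt (by omega) hE₂]
    congr 2
    omega

/-- when `∅ ∉ 𝓕`, the least group congruence `σ` on `S(𝓕)` relates
`(i₁,j₁,F₁)` and `(i₂,j₂,F₂)` iff `i₁ − j₁ = i₂ − j₂`, and `(i,j,F) ↦ i − j` is a
surjective homomorphism onto the additive group `ℤ`; hence `S(𝓕)/σ ≅ ℤ(+)`. -/
theorem stmt18 (𝓕 : Set (Set ℤ)) (h : OmegaClosed 𝓕) (hne : 𝓕.Nonempty)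
    (hempty : (∅ : Set ℤ) ∉ 𝓕) :
    (∀ i₁ j₁ i₂ j₂ : ℤ, ∀ F₁ ∈ 𝓕, ∀ F₂ ∈ 𝓕,
      ((∃ e ∈ Scar 𝓕, smul3 e e = e ∧
        smul3 e (i₁, j₁, F₁) = smul3 e (i₂, j₂, F₂)) ↔ i₁ - j₁ = i₂ - j₂)) ∧
    (∀ x ∈ Scar 𝓕, ∀ y ∈ Scar 𝓕,
      (smul3 x y).1 - (smul3 x y).2.1 = (x.1 - x.2.1) + (y.1 - y.2.1)) ∧
    (∀ z : ℤ, ∃ x ∈ Scar 𝓕, x.1 - x.2.1 = z) :=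
  stmt18_general 𝓕 h hne
end

section
/- Let 𝓕₁ = {A ⊆ ℕ : A has at most one element}. Then 𝓕₁ is ω-closed, and the map f : S(𝓕₁) → B defined by f(i, j, {k}) = (i + k, k, j + k) for i, j ∈ ℤ, k ∈ ℕ, and f(i, j, ∅) = O (where B is the Brandt ℤ-extension of the semilattice (ℕ, min) and O its zero) satisfies: f(x·y) = f(x)·f(y) for all x, y ∈ S(𝓕₁); f is surjective; and f(x) = f(y) holds exactly when x = y or the third components of both x and y equal ∅. Consequently the Rees quotient of S(𝓕₁) by the ideal of ∅-triples is isomorphic to B. -/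
/-- The family `𝓕₁` of all subsets of `ℕ` (viewed inside `ℤ`) with at most one element. -/
def Fam1 : Set (Set ℤ) := {A : Set ℤ | (∀ x ∈ A, 0 ≤ x) ∧ A.Subsingleton}

/-- The Brandt `ℤ`-extension of the semilattice `(ℕ, min)`: `(a,s,b)·(c,t,d) =
(a, min s t, d)` if `b = c` and the zero `O` (represented by `none`) otherwise. -/
def brandtMul : Option (ℤ × ℕ × ℤ) → Option (ℤ × ℕ × ℤ) → Option (ℤ × ℕ × ℤ)
  | some (a, s, b), some (c, t, d) => if b = c then some (a, min s t, d) else none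
  | _, _ => none

/-!
A member of `𝓕₁` is `∅` or a singleton `{k}`, and `(i, j, {k})` corresponds to the Brandt element
`(i + k, k, j + k)`. For singletons the product `(i₁, j₁, {a}) · (i₂, j₂, {b})` is again a
singleton exactly when the two shifted points meet, i.e. `j₁ + a = i₂ + b`, and then the surviving
point is `min a b`: this is the Brandt rule with matching middle indices and `min` on `ℕ`.
-/

lemma zshift_empty (n : ℤ) : zshift n ∅ = ∅ := by
  ext; simp [zshift]

lemma zshift_singleton (n a : ℤ) : zshift n {a} = {n + a} := by
  ext; simp [zshift]

lemma omegaClosed_of_subset_mem {𝓕 : Set (Set ℤ)} (hnonneg : ∀ F ∈ 𝓕, ∀ x ∈ F, 0 ≤ x)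
    (hsub : ∀ F ∈ 𝓕, ∀ G ⊆ F, G ∈ 𝓕) : OmegaClosed 𝓕 :=
  ⟨hnonneg, fun _ _ h₁ _ _ => hsub _ h₁ _ Set.inter_subset_left⟩

lemma omegaClosed_Fam1 : OmegaClosed Fam1 :=
  omegaClosed_of_subset_mem (fun _ hF => hF.1)
    fun _ hF _ hGF => ⟨fun x hx => hF.1 x (hGF hx), hF.2.anti hGF⟩

lemma Fam1.eq_empty_or_singleton {F : Set ℤ} (hF : F ∈ Fam1) :
    F = ∅ ∨ ∃ k : ℕ, F = {(k : ℤ)} := by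
  refine F.eq_empty_or_nonempty.imp_right fun ⟨a, ha⟩ => ?_
  lift a to ℕ using hF.1 a ha
  exact ⟨a, Set.eq_singleton_iff_unique_mem.mpr ⟨ha, fun _ hx => hF.2 hx ha⟩⟩

lemma smul3_snd_snd_eq_empty {x y : ℤ × ℤ × Set ℤ} (h : x.2.2 = ∅ ∨ y.2.2 = ∅) :
    (smul3 x y).2.2 = ∅ := by
  unfold smul3
  rcases h with h | h <;> split_ifs <;> simp [h, zshift_empty]

open Classical in
noncomputable def toBrandt (x : ℤ × ℤ × Set ℤ) : Option (ℤ × ℕ × ℤ) :=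
  if h : ∃ k : ℕ, x.2.2 = {(k : ℤ)} then
    some (x.1 + h.choose, h.choose, x.2.1 + h.choose)
  else none

@[simp]
lemma toBrandt_singleton (i j : ℤ) (k : ℕ) :
    toBrandt (i, j, {(k : ℤ)}) = some (i + k, k, j + k) := by
  have h : ∃ k' : ℕ, ({(k : ℤ)} : Set ℤ) = {(k' : ℤ)} := ⟨k, rfl⟩
  have hk : h.choose = k := by exact_mod_cast (Set.singleton_eq_singleton_iff.mp h.choose_spec).symm
  rw [toBrandt, dif_pos h, hk]

lemma toBrandt_singleton_of_nonneg (i j c : ℤ) (hc : 0 ≤ c) :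
    toBrandt (i, j, {c}) = some (i + c, c.toNat, j + c) := by
  lift c to ℕ using hc
  simp

lemma toBrandt_of_eq_empty {x : ℤ × ℤ × Set ℤ} (hx : x.2.2 = ∅) : toBrandt x = none :=
  dif_neg fun ⟨k, hk⟩ => Set.singleton_ne_empty (k : ℤ) (hk.symm.trans hx)

@[simp]
lemma toBrandt_empty (i j : ℤ) : toBrandt (i, j, ∅) = none :=
  toBrandt_of_eq_empty rfl

lemma toBrandt_singleton_inter_singleton (i j c d : ℤ) (hc : 0 ≤ c) :
    toBrandt (i, j, {c} ∩ {d}) = if c = d then some (i + c, c.toNat, j + c) else none := by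
  split_ifs with hcd
  · rw [hcd, Set.inter_self, ← hcd, toBrandt_singleton_of_nonneg i j c hc]
  · exact toBrandt_of_eq_empty (Set.singleton_inter_eq_empty.mpr hcd)

lemma toBrandt_smul3_singleton (i₁ j₁ i₂ j₂ : ℤ) (a b : ℕ) :
    toBrandt (smul3 (i₁, j₁, {(a : ℤ)}) (i₂, j₂, {(b : ℤ)})) =
      if j₁ + a = i₂ + b then some (i₁ + a, min a b, j₂ + b) else none := by
  rcases lt_trichotomy j₁ i₂ with hlt | rfl | hgt
  · rw [smul3, if_pos hlt]
    dsimp only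
    rw [zshift_singleton, Set.inter_comm, toBrandt_singleton_inter_singleton _ _ _ _ b.cast_nonneg]
    split_ifs <;> first | omega | simp only [Option.some.injEq, Prod.mk.injEq, and_true]
    all_goals omega
  · rw [smul3, if_neg (lt_irrefl _), if_pos rfl]
    dsimp only
    rw [toBrandt_singleton_inter_singleton _ _ _ _ a.cast_nonneg]
    split_ifs <;> first | omega | simp only [Option.some.injEq, Prod.mk.injEq, true_and]
    all_goals omega
  · rw [smul3, if_neg hgt.not_gt, if_neg hgt.ne']
    dsimp only
    rw [zshift_singleton, toBrandt_singleton_inter_singleton _ _ _ _ a.cast_nonneg]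
    split_ifs <;> first | omega | simp only [Option.some.injEq, Prod.mk.injEq, true_and]
    all_goals omega

lemma toBrandt_smul3 {x y : ℤ × ℤ × Set ℤ} (hx : x ∈ Scar Fam1) (hy : y ∈ Scar Fam1) :
    toBrandt (smul3 x y) = brandtMul (toBrandt x) (toBrandt y) := by
  obtain ⟨i₁, j₁, F₁⟩ := x
  obtain ⟨i₂, j₂, F₂⟩ := y
  rcases Fam1.eq_empty_or_singleton hx with rfl | ⟨a, rfl⟩
  · rw [toBrandt_of_eq_empty (smul3_snd_snd_eq_empty (.inl rfl)), toBrandt_empty]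
    rfl
  rcases Fam1.eq_empty_or_singleton hy with rfl | ⟨b, rfl⟩
  · rw [toBrandt_of_eq_empty (smul3_snd_snd_eq_empty (.inr rfl)), toBrandt_empty,
      toBrandt_singleton]
    rfl
  · rw [toBrandt_smul3_singleton, toBrandt_singleton, toBrandt_singleton]
    rfl

lemma exists_toBrandt_eq (z : Option (ℤ × ℕ × ℤ)) : ∃ x ∈ Scar Fam1, toBrandt x = z := by
  rcases z with _ | ⟨a, s, b⟩
  · exact ⟨(0, 0, ∅), ⟨by simp, Set.subsingleton_empty⟩, toBrandt_empty 0 0⟩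
  · refine ⟨(a - s, b - s, {(s : ℤ)}), ⟨by simp, Set.subsingleton_singleton⟩, ?_⟩
    simp

lemma toBrandt_eq_toBrandt_iff {x y : ℤ × ℤ × Set ℤ} (hx : x ∈ Scar Fam1) (hy : y ∈ Scar Fam1) :
    toBrandt x = toBrandt y ↔ x = y ∨ (x.2.2 = ∅ ∧ y.2.2 = ∅) := by
  obtain ⟨i₁, j₁, F₁⟩ := x
  obtain ⟨i₂, j₂, F₂⟩ := y
  rcases Fam1.eq_empty_or_singleton hx with rfl | ⟨a, rfl⟩ <;>
    rcases Fam1.eq_empty_or_singleton hy with rfl | ⟨b, rfl⟩ <;>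
    simp
  omega

/-- `𝓕₁` is `ω`-closed and the map `f(i,j,{k}) = (i+k, k, j+k)`,
`f(i,j,∅) = O` is multiplicative and surjective onto the Brandt `ℤ`-extension of
`(ℕ, min)`, identifying exactly the `∅`-triples; hence the Rees quotient of `S(𝓕₁)`
by the ideal of `∅`-triples is isomorphic to that Brandt extension. -/
theorem stmt19 :
    OmegaClosed Fam1 ∧
    ∃ f : ℤ × ℤ × Set ℤ → Option (ℤ × ℕ × ℤ),
      (∀ i j : ℤ, ∀ k : ℕ, f (i, j, ({(k : ℤ)} : Set ℤ)) = some (i + k, k, j + k)) ∧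
      (∀ i j : ℤ, f (i, j, (∅ : Set ℤ)) = none) ∧
      (∀ x ∈ Scar Fam1, ∀ y ∈ Scar Fam1, f (smul3 x y) = brandtMul (f x) (f y)) ∧
      (∀ z : Option (ℤ × ℕ × ℤ), ∃ x ∈ Scar Fam1, f x = z) ∧
      (∀ x ∈ Scar Fam1, ∀ y ∈ Scar Fam1,
        (f x = f y ↔ x = y ∨ (x.2.2 = (∅ : Set ℤ) ∧ y.2.2 = (∅ : Set ℤ)))) :=
  ⟨omegaClosed_Fam1, toBrandt, toBrandt_singleton, toBrandt_empty,
    fun _ hx _ hy => toBrandt_smul3 hx hy, exists_toBrandt_eq,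
    fun _ hx _ hy => toBrandt_eq_toBrandt_iff hx hy⟩
end
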